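/- For every real t with 0 < t < 2, with Y_{1,s} := Ỹ_s/Y_s, S_{1,s} := S̃_s − S_s, R₁(t) = R₂(t) := t and R₃(t) := t(6−t)/(3(2−t)): (i) 1·R₁(t)·(Y_{1,1}(t)^{1/2} + 1) = S_{1,1}(t)·(Y_{1,1}(t)^{1/2} − 1); (ii) 2·R₂(t)·(Y_{1,2}(t) + 1) = S_{1,2}(t)·(Y_{1,2}(t) − 1); (iii) 3·R₃(t)·(Y_{1,3}(t)^{3/2} + 1) = S_{1,3}(t)·(Y_{1,3}(t)^{3/2} − 1). (Real powers of positive reals; these are the instances s = 1, 2, 3 of s·R_s·(Y_{1,s}^{s/2}+1) = S_{1,s}·(Y_{1,s}^{s/2}−1).) -/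

import Mathlib

/-! Göttsche–Kool universal functions of a real variable `t`, with all square
roots the nonnegative real square roots.  The `t`-suffixed versions
(`gkYt`, `gkZt`, `gkSt`) are the sign-flipped functions obtained by
replacing `√t` with `−√t`. -/

noncomputable def gkY1 (t : ℝ) : ℝ := (1 + t) + Real.sqrt t * Real.sqrt (1 + 3*t/4)
noncomputable def gkYt1 (t : ℝ) : ℝ := (1 + t) - Real.sqrt t * Real.sqrt (1 + 3*t/4)
noncomputable def gkY2 (t : ℝ) : ℝ := Real.sqrt t + Real.sqrt (1 + t)
noncomputable def gkYt2 (t : ℝ) : ℝ := -Real.sqrt t + Real.sqrt (1 + t)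
noncomputable def gkY3 (t : ℝ) : ℝ := 1 + Real.sqrt t * Real.sqrt (1 - t/4)
noncomputable def gkYt3 (t : ℝ) : ℝ := 1 - Real.sqrt t * Real.sqrt (1 - t/4)
noncomputable def gkZ1 (t : ℝ) : ℝ :=
  (1 + 3*t/4 - (1/2) * Real.sqrt t * Real.sqrt (1 + 3*t/4)) / (1 + t/2)
noncomputable def gkZt1 (t : ℝ) : ℝ :=
  (1 + 3*t/4 + (1/2) * Real.sqrt t * Real.sqrt (1 + 3*t/4)) / (1 + t/2)
noncomputable def gkZ2 (t : ℝ) : ℝ := 1 + t - Real.sqrt t * Real.sqrt (1 + t)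
noncomputable def gkZt2 (t : ℝ) : ℝ := 1 + t + Real.sqrt t * Real.sqrt (1 + t)
noncomputable def gkZ3 (t : ℝ) : ℝ :=
  (1 + t/2) * ((1 - t/4)*(1 + t/2)
    - (3/2) * Real.sqrt t * Real.sqrt (1 - t/4) * (1 - t/6)) / (1 - t/2)^3
noncomputable def gkZt3 (t : ℝ) : ℝ :=
  (1 + t/2) * ((1 - t/4)*(1 + t/2)
    + (3/2) * Real.sqrt t * Real.sqrt (1 - t/4) * (1 - t/6)) / (1 - t/2)^3
noncomputable def gkS1 (t : ℝ) : ℝ := -t/2 + Real.sqrt t * Real.sqrt (1 + 3*t/4)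
noncomputable def gkSt1 (t : ℝ) : ℝ := -t/2 - Real.sqrt t * Real.sqrt (1 + 3*t/4)
noncomputable def gkS2 (t : ℝ) : ℝ := -t + Real.sqrt t * Real.sqrt (1 + t)
noncomputable def gkSt2 (t : ℝ) : ℝ := -t - Real.sqrt t * Real.sqrt (1 + t)
noncomputable def gkS3 (t : ℝ) : ℝ :=
  (-(3/2)*t*(1 - t/6) + Real.sqrt t * Real.sqrt (1 - t/4) * (1 + t/2)) / (1 - t/2)
noncomputable def gkSt3 (t : ℝ) : ℝ :=
  (-(3/2)*t*(1 - t/6) - Real.sqrt t * Real.sqrt (1 - t/4) * (1 + t/2)) / (1 - t/2)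
noncomputable def gkV2 (t : ℝ) : ℝ := (1 + t)^2
noncomputable def gkV3 (t : ℝ) : ℝ := (1 + t/2)^3 / (1 - t/2)
noncomputable def gkW1 (t : ℝ) : ℝ := (1 + t/2)⁻¹
noncomputable def gkW2 (t : ℝ) : ℝ := (Real.sqrt (1 + t))⁻¹
noncomputable def gkW3 (t : ℝ) : ℝ := 2 / (2 + t)
noncomputable def gkX1 (t : ℝ) : ℝ :=
  (1 + t/2) ^ (-(3:ℝ)/4) * (1 + 3*t/4) ^ (-(1:ℝ)/2)
noncomputable def gkX2 (t : ℝ) : ℝ := (1 + t) ^ (-(3:ℝ)/2)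
noncomputable def gkX3 (t : ℝ) : ℝ :=
  (1 - t/2) ^ ((3:ℝ)/4) * (1 - t/4) ^ (-(1:ℝ)/2) * (1 + t/2) ^ (-(4:ℝ))

/-! Write `a = √t` and `β = √(1 + 3t/4)` for `s = 1`, `β = √(1 - t/4)` for `s = 3`. Then
`Ỹ_s = (β - a/2)²` and `Y_s = (β + a/2)²`, so `Y_{1,s}^{1/2} = (β - a/2)/(β + a/2)`, the base being
nonnegative because `β ≥ a/2` (for `s = 3` this needs `t ≤ 2`); and `Y_{1,2}` is already
`(√(1+t) - a)/(√(1+t) + a)`. So in each case `Y_{1,s}^{s/2}` has the form `(x - y)/(x + y)`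
(for `s = 3` after cubing: `x = β³ + 3β(a/2)²`, `y = 3β²(a/2) + (a/2)³`), and for such a value
`v` the relation `s R_s (v + 1) = S_{1,s} (v - 1)` is equivalent to `s R_s x = -S_{1,s} y`, which
is a polynomial identity modulo `a² = t` and the equation for `β²`. -/

open Real

lemma sq_rpow_div_two {q : ℝ} (hq : 0 ≤ q) (r : ℝ) : (q ^ 2) ^ (r / 2) = q ^ r := by
  rw [← rpow_two, ← rpow_mul hq]
  ring_nf

lemma mul_sub_div_add_add_one_eq {R S x y : ℝ} (hxy : x + y ≠ 0) (h : R * x = -(S * y)) :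
    R * ((x - y) / (x + y) + 1) = S * ((x - y) / (x + y) - 1) := by
  field_simp
  linear_combination 2 * h

lemma sub_div_add_pow_three (x y : ℝ) :
    ((x - y) / (x + y)) ^ 3
      = ((x ^ 3 + 3 * x * y ^ 2) - (3 * x ^ 2 * y + y ^ 3))
        / ((x ^ 3 + 3 * x * y ^ 2) + (3 * x ^ 2 * y + y ^ 3)) := by
  rw [div_pow]
  congr 1 <;> ring

section

variable {t : ℝ}

lemma gkYt1_div_gkY1 (ht : 0 ≤ t) :
    gkYt1 t / gkY1 t = ((√(1 + 3 * t / 4) - √t / 2) / (√(1 + 3 * t / 4) + √t / 2)) ^ 2 := by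
  have ha := sq_sqrt ht
  have hb := sq_sqrt (by positivity : (0 : ℝ) ≤ 1 + 3 * t / 4)
  rw [div_pow, gkYt1, gkY1]
  congr 1 <;> linear_combination -hb - ha / 4

lemma gkYt2_div_gkY2 : gkYt2 t / gkY2 t = (√(1 + t) - √t) / (√(1 + t) + √t) := by
  rw [gkYt2, gkY2]
  ring

lemma gkYt3_div_gkY3 (ht : 0 ≤ t) (ht4 : t ≤ 4) :
    gkYt3 t / gkY3 t = ((√(1 - t / 4) - √t / 2) / (√(1 - t / 4) + √t / 2)) ^ 2 := by
  have ha := sq_sqrt ht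
  have hb := sq_sqrt (by linarith : (0 : ℝ) ≤ 1 - t / 4)
  rw [div_pow, gkYt3, gkY3]
  congr 1 <;> linear_combination -hb - ha / 4

lemma gkSt1_sub_gkS1 : gkSt1 t - gkS1 t = -(2 * √t * √(1 + 3 * t / 4)) := by
  rw [gkSt1, gkS1]
  ring

lemma gkSt2_sub_gkS2 : gkSt2 t - gkS2 t = -(2 * √t * √(1 + t)) := by
  rw [gkSt2, gkS2]
  ring

lemma gkSt3_sub_gkS3 :
    gkSt3 t - gkS3 t = -(2 * √t * √(1 - t / 4) * (1 + t / 2)) / (1 - t / 2) := by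
  rw [gkSt3, gkS3]
  ring

lemma blowup_relation_one (ht : 0 ≤ t) :
    1*t*((gkYt1 t / gkY1 t) ^ ((1:ℝ)/2) + 1)
      = (gkSt1 t - gkS1 t) * ((gkYt1 t / gkY1 t) ^ ((1:ℝ)/2) - 1) := by
  have ha := sq_sqrt ht
  have hb := sq_sqrt (by positivity : (0 : ℝ) ≤ 1 + 3 * t / 4)
  have hb_pos : 0 < √(1 + 3 * t / 4) := sqrt_pos.2 (by positivity)
  have hab : √t / 2 ≤ √(1 + 3 * t / 4) := by nlinarith [sqrt_nonneg t]
  rw [gkYt1_div_gkY1 ht, sq_rpow_div_two (div_nonneg (by linarith) (by positivity)), rpow_one,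
    gkSt1_sub_gkS1]
  refine mul_sub_div_add_add_one_eq (by positivity) ?_
  linear_combination -√(1 + 3 * t / 4) * ha

lemma blowup_relation_two (ht : 0 ≤ t) :
    2*t*((gkYt2 t / gkY2 t) + 1) = (gkSt2 t - gkS2 t) * ((gkYt2 t / gkY2 t) - 1) := by
  have ha := sq_sqrt ht
  have hc_pos : 0 < √(1 + t) := sqrt_pos.2 (by linarith)
  rw [gkYt2_div_gkY2, gkSt2_sub_gkS2]
  refine mul_sub_div_add_add_one_eq (by positivity) ?_
  linear_combination -2 * √(1 + t) * ha

lemma blowup_relation_three (ht : 0 ≤ t) (ht2 : t < 2) :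
    3*(t*(6 - t)/(3*(2 - t)))*((gkYt3 t / gkY3 t) ^ ((3:ℝ)/2) + 1)
      = (gkSt3 t - gkS3 t) * ((gkYt3 t / gkY3 t) ^ ((3:ℝ)/2) - 1) := by
  have ha := sq_sqrt ht
  have hb := sq_sqrt (by linarith : (0 : ℝ) ≤ 1 - t / 4)
  have hb_pos : 0 < √(1 - t / 4) := sqrt_pos.2 (by linarith)
  have hab : √t / 2 ≤ √(1 - t / 4) := by nlinarith [sqrt_nonneg t]
  rw [gkYt3_div_gkY3 ht (by linarith), sq_rpow_div_two (div_nonneg (by linarith) (by positivity)),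
    show (3 : ℝ) = (3 : ℕ) by norm_num, rpow_natCast, sub_div_add_pow_three, gkSt3_sub_gkS3]
  set a := √t
  set b := √(1 - t / 4)
  have hX : b ^ 3 + 3 * b * (a / 2) ^ 2 = b * (1 + t / 2) := by
    linear_combination b * hb + 3 / 4 * b * ha
  have hY : 3 * b ^ 2 * (a / 2) + (a / 2) ^ 3 = a / 2 * (3 - t / 2) := by
    linear_combination 3 / 2 * a * hb + a / 8 * ha
  refine mul_sub_div_add_add_one_eq (by positivity) ?_
  rw [hX, hY]
  have h2t : (2 : ℝ) - t ≠ 0 := by linarith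
  have h1t : (1 : ℝ) - t / 2 ≠ 0 := by linarith
  field_simp
  linear_combination (t - 6) * ha

end

/-- for `0 < t < 2`, with `Y_{1,s} = Ỹ_s/Y_s`,
`S_{1,s} = S̃_s − S_s`, `R₁ = R₂ = t` and `R₃(t) = t(6−t)/(3(2−t))`, the
blowup-equation identity
`s·R_s·(Y_{1,s}^{s/2} + 1) = S_{1,s}·(Y_{1,s}^{s/2} − 1)` holds for
`s = 1, 2, 3` (real powers of positive reals). -/
theorem stmt_17 (t : ℝ) (ht0 : 0 < t) (ht2 : t < 2) :
    1*t*((gkYt1 t / gkY1 t) ^ ((1:ℝ)/2) + 1)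
      = (gkSt1 t - gkS1 t) * ((gkYt1 t / gkY1 t) ^ ((1:ℝ)/2) - 1) ∧
    2*t*((gkYt2 t / gkY2 t) + 1)
      = (gkSt2 t - gkS2 t) * ((gkYt2 t / gkY2 t) - 1) ∧
    3*(t*(6 - t)/(3*(2 - t)))*((gkYt3 t / gkY3 t) ^ ((3:ℝ)/2) + 1)
      = (gkSt3 t - gkS3 t) * ((gkYt3 t / gkY3 t) ^ ((3:ℝ)/2) - 1) :=
  ⟨blowup_relation_one ht0.le, blowup_relation_two ht0.le, blowup_relation_three ht0.le ht2⟩
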